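/- In V = F_3^5 with quadratic form q(a) = a_0^2 - a_1^2 - ... - a_4^2, orthogonality is a transitive relation on the 12 antipodal pairs of short vectors orthogonal to a fixed long vector: if {±u}, {±v}, {±w} are antipodal pairs of norm -1 vectors all orthogonal to the long vector (1,0,0,0,0), with u ⊥ v and v ⊥ w and {±u} ≠ {±w}, then u ⊥ w. -/
import Mathlib


abbrev V : Type := Fin 5 → ZMod 3

def q (a : V) : ZMod 3 := a 0 ^ 2 - a 1 ^ 2 - a 2 ^ 2 - a 3 ^ 2 - a 4 ^ 2

def b (x y : V) : ZMod 3 := x 0 * y 0 - x 1 * y 1 - x 2 * y 2 - x 3 * y 3 - x 4 * y 4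

def e0 : V := fun i => if i = 0 then 1 else 0

abbrev T := ZMod 3 × ZMod 3 × ZMod 3 × ZMod 3

def S : List T := [(0,0,0,1), (0,0,0,2), (0,0,1,0), (0,0,2,0), (0,1,0,0), (0,2,0,0), (1,0,0,0), (1,1,1,1), (1,1,1,2), (1,1,2,1), (1,1,2,2), (1,2,1,1), (1,2,1,2), (1,2,2,1), (1,2,2,2), (2,0,0,0), (2,1,1,1), (2,1,1,2), (2,1,2,1), (2,1,2,2), (2,2,1,1), (2,2,1,2), (2,2,2,1), (2,2,2,2)]

def dot (p r : T) : ZMod 3 := -(p.1*r.1) - p.2.1*r.2.1 - p.2.2.1*r.2.2.1 - p.2.2.2*r.2.2.2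

lemma memS : ∀ a c d e : ZMod 3, (-a^2-c^2-d^2-e^2 = -1) → (a,c,d,e) ∈ S := by decide

set_option maxHeartbeats 4000000 in
lemma key : ∀ p ∈ S, ∀ r ∈ S, ∀ s ∈ S, dot p r = 0 → dot r s = 0 → s ≠ p → s ≠ -p → dot p s = 0 := by decide

theorem stmt7 (u v w : V) (hu : q u = -1) (hv : q v = -1) (hw : q w = -1)
    (hu0 : b e0 u = 0) (hv0 : b e0 v = 0) (hw0 : b e0 w = 0)
    (huv : b u v = 0) (hvw : b v w = 0) (hne : w ≠ u ∧ w ≠ -u) :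
    b u w = 0 := by
  simp [b, e0] at hu0 hv0 hw0
  simp [q, hu0, hv0, hw0] at hu hv hw
  have pu := memS _ _ _ _ hu
  have pv := memS _ _ _ _ hv
  have pw := memS _ _ _ _ hw
  have h1 : dot (u 1, u 2, u 3, u 4) (v 1, v 2, v 3, v 4) = 0 := by
    simpa [b, dot, hu0, hv0] using huv
  have h2 : dot (v 1, v 2, v 3, v 4) (w 1, w 2, w 3, w 4) = 0 := by
    simpa [b, dot, hv0, hw0] using hvw
  have h3 : ((w 1, w 2, w 3, w 4) : T) ≠ (u 1, u 2, u 3, u 4) := by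
    intro h
    apply hne.1
    simp only [Prod.mk.injEq] at h
    funext i
    fin_cases i <;> simp [hu0, hw0, h]
  have h4 : ((w 1, w 2, w 3, w 4) : T) ≠ -(u 1, u 2, u 3, u 4) := by
    intro h
    apply hne.2
    simp only [Prod.neg_mk, Prod.mk.injEq] at h
    funext i
    fin_cases i <;> simp [hu0, hw0, h]
  have := key _ pu _ pv _ pw h1 h2 h3 h4
  simpa [b, dot, hu0, hw0] using this
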